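/- The MBQC teleportation protocol implements the identity channel on one qubit: for every matrix ρ : Matrix (Fin 2) (Fin 2) ℂ, ∑_{s1 s2 : ZMod 2} C s1 s2 * Tr₁₂((Pi 0 s1 ⊗ₖ (Pi 0 s2 ⊗ₖ 1)) * E₂₃ * E₁₂ * (ρ ⊗ₖ (P₊ ⊗ₖ P₊)) * E₁₂ * E₂₃ * (Pi 0 s1 ⊗ₖ (Pi 0 s2 ⊗ₖ 1))) * (C s1 s2)ᴴ = ρ, where C s1 s2 := X^(s2.val) * Z^(s1.val) and (·)ᴴ is the conjugate transpose. -/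
import Mathlib


open Matrix Kronecker BigOperators

/-- Pauli X matrix. -/
noncomputable def PX : Matrix (Fin 2) (Fin 2) ℂ := !![0, 1; 1, 0]

/-- Pauli Y matrix. -/
noncomputable def PY : Matrix (Fin 2) (Fin 2) ℂ := !![0, -Complex.I; Complex.I, 0]

/-- Pauli Z matrix. -/
noncomputable def PZ : Matrix (Fin 2) (Fin 2) ℂ := !![1, 0; 0, -1]

/-- The controlled-Z gate. -/
noncomputable def Egate : Matrix (Fin 2 × Fin 2) (Fin 2 × Fin 2) ℂ :=
  (!![1, 0; 0, 0] : Matrix (Fin 2) (Fin 2) ℂ) ⊗ₖ (1 : Matrix (Fin 2) (Fin 2) ℂ)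
    + (!![0, 0; 0, 1] : Matrix (Fin 2) (Fin 2) ℂ) ⊗ₖ PZ

/-- The α-measurement projector in Bloch form. -/
noncomputable def Pmat (α : ℝ) (t : ZMod 2) : Matrix (Fin 2) (Fin 2) ℂ :=
  (1 / 2 : ℂ) • ((1 : Matrix (Fin 2) (Fin 2) ℂ) +
    ((-1 : ℂ)) ^ t.val • ((Real.cos α : ℂ) • PX + (Real.sin α : ℂ) • PY))

/-- The projector onto `|+⟩`. -/
noncomputable def Pplus : Matrix (Fin 2) (Fin 2) ℂ := (1 / 2 : ℂ) • !![1, 1; 1, 1]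

/-- The controlled-Z gate on qubits 2 and 3 of a three-qubit system. -/
noncomputable def E23 : Matrix (Fin 2 × (Fin 2 × Fin 2)) (Fin 2 × (Fin 2 × Fin 2)) ℂ :=
  (1 : Matrix (Fin 2) (Fin 2) ℂ) ⊗ₖ Egate

/-- The controlled-Z gate on qubits 1 and 2 of a three-qubit system. -/
noncomputable def E12 : Matrix (Fin 2 × (Fin 2 × Fin 2)) (Fin 2 × (Fin 2 × Fin 2)) ℂ :=
  Matrix.of fun x y =>
    Egate (x.1, x.2.1) (y.1, y.2.1) * (if x.2.2 = y.2.2 then 1 else 0)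

/-- Partial trace over the first two qubits of a three-qubit system. -/
noncomputable def tr12 (M : Matrix (Fin 2 × (Fin 2 × Fin 2)) (Fin 2 × (Fin 2 × Fin 2)) ℂ) :
    Matrix (Fin 2) (Fin 2) ℂ :=
  Matrix.of fun i j => ∑ k : Fin 2, ∑ l : Fin 2, M (k, (l, i)) (k, (l, j))

/-- The Pauli correction `X^{s2} Z^{s1}`. -/
noncomputable def Corr (s1 s2 : ZMod 2) : Matrix (Fin 2) (Fin 2) ℂ :=
  PX ^ s2.val * PZ ^ s1.val

private lemma hE12 : E12 = Matrix.diagonal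
    (fun x => if x.1 = 1 ∧ x.2.1 = 1 then (-1 : ℂ) else 1) := by
  ext ⟨a, b, c⟩ ⟨a', b', c'⟩
  fin_cases a <;> fin_cases b <;> fin_cases c <;> fin_cases a' <;> fin_cases b' <;>
    fin_cases c' <;>
    simp [E12, Egate, PZ, Matrix.diagonal_apply, Matrix.one_apply, Prod.ext_iff,
      Matrix.kroneckerMap_apply]

private lemma hE23 : E23 = Matrix.diagonal
    (fun x => if x.2.1 = 1 ∧ x.2.2 = 1 then (-1 : ℂ) else 1) := by
  ext ⟨a, b, c⟩ ⟨a', b', c'⟩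
  fin_cases a <;> fin_cases b <;> fin_cases c <;> fin_cases a' <;> fin_cases b' <;>
    fin_cases c' <;>
    simp [E23, Egate, PZ, Matrix.diagonal_apply, Matrix.one_apply, Prod.ext_iff,
      Matrix.kroneckerMap_apply]

set_option maxHeartbeats 4000000 in
private lemma key_term (ρ : Matrix (Fin 2) (Fin 2) ℂ) (s1 s2 : ZMod 2) :
    Corr s1 s2 *
      tr12 ((Pmat 0 s1 ⊗ₖ (Pmat 0 s2 ⊗ₖ (1 : Matrix (Fin 2) (Fin 2) ℂ))) * E23 * E12 *
        (ρ ⊗ₖ (Pplus ⊗ₖ Pplus)) * E12 * E23 *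
        (Pmat 0 s1 ⊗ₖ (Pmat 0 s2 ⊗ₖ (1 : Matrix (Fin 2) (Fin 2) ℂ)))) *
      (Corr s1 s2)ᴴ = (1 / 4 : ℂ) • ρ := by
  have h2 : ∀ s : ZMod 2, s = 0 ∨ s = 1 := by decide
  simp only [Matrix.mul_assoc, hE12, hE23]
  rcases h2 s1 with rfl | rfl <;> rcases h2 s2 with rfl | rfl <;>
    ext i j <;> fin_cases i <;> fin_cases j <;>
    (simp [Corr, Pmat, PX, PY, PZ, Pplus, tr12, Matrix.mul_apply, Matrix.diagonal_apply,
      Matrix.diagonal_mul, Matrix.mul_diagonal,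
      Fintype.sum_prod_type, Fin.sum_univ_two, Matrix.kroneckerMap_apply, Matrix.one_apply,
      Prod.ext_iff, ZMod.val_zero, ZMod.val_one, Matrix.conjTranspose_apply]; ring_nf)

/-- The MBQC teleportation protocol implements the identity channel on one qubit. -/
theorem teleportation_implements_identity (ρ : Matrix (Fin 2) (Fin 2) ℂ) :
    ∑ s1 : ZMod 2, ∑ s2 : ZMod 2,
      Corr s1 s2 *
        tr12 ((Pmat 0 s1 ⊗ₖ (Pmat 0 s2 ⊗ₖ (1 : Matrix (Fin 2) (Fin 2) ℂ))) * E23 * E12 *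
          (ρ ⊗ₖ (Pplus ⊗ₖ Pplus)) * E12 * E23 *
          (Pmat 0 s1 ⊗ₖ (Pmat 0 s2 ⊗ₖ (1 : Matrix (Fin 2) (Fin 2) ℂ)))) *
        (Corr s1 s2)ᴴ
      = ρ := by
  simp only [key_term, Finset.sum_const, Finset.card_univ, ZMod.card, smul_smul]
  ext i j
  simp [Matrix.smul_apply]
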